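/- Classical Noether constant of motion (the differentiable case of Theorem 3.4): if L is C¹, q is a C² Euler–Lagrange extremal, and (τ, ξ) are C¹ functions such that the invariance identity ∂₁L·τ + ∂₂L·ξ + ∂₃L·(ξ' − q'τ') + L·τ' = 0 holds along q (all derivatives of τ, ξ taken as total derivatives along t ↦ (t, q(t))), then C(t) = ∂₃L(t,q,q')·ξ(t,q(t)) + (L(t,q,q') − ∂₃L(t,q,q')·q'(t))·τ(t,q(t)) is constant in t. -/

import Mathlib

theorem noether_classical
    (L P1 P2 P3 : ℝ → ℝ → ℝ → ℝ) (q : ℝ → ℝ) (τ ξ : ℝ → ℝ → ℝ) (τ' ξ' : ℝ → ℝ)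
    (hL : ContDiff ℝ 1 (fun p : ℝ × ℝ × ℝ => L p.1 p.2.1 p.2.2))
    (hq : ContDiff ℝ 2 q)
    (hτ : ContDiff ℝ 1 (fun p : ℝ × ℝ => τ p.1 p.2))
    (hξ : ContDiff ℝ 1 (fun p : ℝ × ℝ => ξ p.1 p.2))
    (hP1 : ∀ x y v : ℝ, HasDerivAt (fun s => L s y v) (P1 x y v) x)
    (hP2 : ∀ x y v : ℝ, HasDerivAt (fun s => L x s v) (P2 x y v) y)
    (hP3 : ∀ x y v : ℝ, HasDerivAt (fun s => L x y s) (P3 x y v) v)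
    (hEL : ∀ t : ℝ, HasDerivAt (fun s => P3 s (q s) (deriv q s))
      (P2 t (q t) (deriv q t)) t)
    (hτ' : ∀ t : ℝ, HasDerivAt (fun s => τ s (q s)) (τ' t) t)
    (hξ' : ∀ t : ℝ, HasDerivAt (fun s => ξ s (q s)) (ξ' t) t)
    (hinv : ∀ t : ℝ,
      P1 t (q t) (deriv q t) * τ t (q t) + P2 t (q t) (deriv q t) * ξ t (q t)
        + P3 t (q t) (deriv q t) * (ξ' t - deriv q t * τ' t)
        + L t (q t) (deriv q t) * τ' t = 0) :
    ∀ t₁ t₂ : ℝ,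
      P3 t₁ (q t₁) (deriv q t₁) * ξ t₁ (q t₁)
        + (L t₁ (q t₁) (deriv q t₁) - P3 t₁ (q t₁) (deriv q t₁) * deriv q t₁) * τ t₁ (q t₁)
      = P3 t₂ (q t₂) (deriv q t₂) * ξ t₂ (q t₂)
        + (L t₂ (q t₂) (deriv q t₂) - P3 t₂ (q t₂) (deriv q t₂) * deriv q t₂) * τ t₂ (q t₂) := by
  have hq1 : ∀ t, HasDerivAt q (deriv q t) t := fun t =>
    ((hq.differentiable (by norm_num)) t).hasDerivAt
  have hqd : Differentiable ℝ (deriv q) := by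
    have hq' : ContDiff ℝ ((1:ℕ)+1) q := by exact_mod_cast hq
    exact (contDiff_succ_iff_deriv.mp hq').2.2.differentiable (by norm_num)
  have hv : ∀ t, HasDerivAt (deriv q) (deriv (deriv q) t) t := fun t =>
    (hqd t).hasDerivAt
  set F : ℝ × ℝ × ℝ → ℝ := fun p => L p.1 p.2.1 p.2.2 with hFdef
  have hFd : Differentiable ℝ F := hL.differentiable (by norm_num)
  -- partials identified with fderiv
  have key : ∀ x y v : ℝ,
      ∀ a b c : ℝ, (fderiv ℝ F (x, y, v)) (a, b, c)
        = a * P1 x y v + b * P2 x y v + c * P3 x y v := by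
    intro x y v a b c
    have h1 : HasDerivAt (fun s => F (s, y, v)) ((fderiv ℝ F (x, y, v)) (1, 0, 0)) x := by
      have hc : HasDerivAt (fun s : ℝ => (s, y, v)) ((1 : ℝ), (0 : ℝ), (0 : ℝ)) x :=
        (hasDerivAt_id x).prodMk ((hasDerivAt_const x y).prodMk (hasDerivAt_const x v))
      exact (hFd (x, y, v)).hasFDerivAt.comp_hasDerivAt x hc
    have h2 : HasDerivAt (fun s => F (x, s, v)) ((fderiv ℝ F (x, y, v)) (0, 1, 0)) y := by
      have hc : HasDerivAt (fun s : ℝ => (x, s, v)) ((0 : ℝ), (1 : ℝ), (0 : ℝ)) y :=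
        (hasDerivAt_const y x).prodMk ((hasDerivAt_id y).prodMk (hasDerivAt_const y v))
      exact (hFd (x, y, v)).hasFDerivAt.comp_hasDerivAt y hc
    have h3 : HasDerivAt (fun s => F (x, y, s)) ((fderiv ℝ F (x, y, v)) (0, 0, 1)) v := by
      have hc : HasDerivAt (fun s : ℝ => (x, y, s)) ((0 : ℝ), (0 : ℝ), (1 : ℝ)) v :=
        (hasDerivAt_const v x).prodMk ((hasDerivAt_const v y).prodMk (hasDerivAt_id v))
      exact (hFd (x, y, v)).hasFDerivAt.comp_hasDerivAt v hc
    have e1 : (fderiv ℝ F (x, y, v)) (1, 0, 0) = P1 x y v :=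
      h1.unique (hP1 x y v)
    have e2 : (fderiv ℝ F (x, y, v)) (0, 1, 0) = P2 x y v :=
      h2.unique (hP2 x y v)
    have e3 : (fderiv ℝ F (x, y, v)) (0, 0, 1) = P3 x y v :=
      h3.unique (hP3 x y v)
    have hdecomp : ((a, b, c) : ℝ × ℝ × ℝ)
        = a • ((1:ℝ), (0:ℝ), (0:ℝ)) + b • ((0:ℝ), (1:ℝ), (0:ℝ)) + c • ((0:ℝ), (0:ℝ), (1:ℝ)) := by
      simp [Prod.ext_iff]
    rw [hdecomp, map_add, map_add, map_smul, map_smul, map_smul, e1, e2, e3]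
    simp [smul_eq_mul]
  -- derivative of L along the path
  have hLt : ∀ t, HasDerivAt (fun s => L s (q s) (deriv q s))
      (P1 t (q t) (deriv q t) + deriv q t * P2 t (q t) (deriv q t)
        + deriv (deriv q) t * P3 t (q t) (deriv q t)) t := by
    intro t
    have hc : HasDerivAt (fun s : ℝ => (s, q s, deriv q s))
        ((1 : ℝ), deriv q t, deriv (deriv q) t) t :=
      (hasDerivAt_id t).prodMk ((hq1 t).prodMk (hv t))
    have := (hFd (t, q t, deriv q t)).hasFDerivAt.comp_hasDerivAt t hc
    rw [key t (q t) (deriv q t) 1 (deriv q t) (deriv (deriv q) t)] at this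
    rw [one_mul] at this
    exact this
  -- the conserved quantity
  set C : ℝ → ℝ := fun t =>
    P3 t (q t) (deriv q t) * ξ t (q t)
      + (L t (q t) (deriv q t) - P3 t (q t) (deriv q t) * deriv q t) * τ t (q t) with hCdef
  have hC : ∀ t, HasDerivAt C 0 t := by
    intro t
    have h2 := ((hEL t).mul (hξ' t)).add
      (((hLt t).sub ((hEL t).mul (hv t))).mul (hτ' t))
    have e : P2 t (q t) (deriv q t) * ξ t (q t) + P3 t (q t) (deriv q t) * ξ' t
        + ((P1 t (q t) (deriv q t) + deriv q t * P2 t (q t) (deriv q t)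
            + deriv (deriv q) t * P3 t (q t) (deriv q t)
          - (P2 t (q t) (deriv q t) * deriv q t
            + P3 t (q t) (deriv q t) * deriv (deriv q) t)) * τ t (q t)
          + (L t (q t) (deriv q t) - P3 t (q t) (deriv q t) * deriv q t) * τ' t) = 0 := by
      linear_combination hinv t
    exact e ▸ h2
  intro t₁ t₂
  exact is_const_of_deriv_eq_zero (fun t => (hC t).differentiableAt)
    (fun t => (hC t).deriv) t₁ t₂
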